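/- Let F be a field of sets over a set X, let A be an atom of F, and let A' be a non-empty proper subset of A. Then every member B of C(F ∪ {A'}) can be written as B = D ∪ E ∪ G where D ∈ {∅, A'}, E ∈ {∅, A \ A'}, and G ∈ F. -/

import Mathlib

/-!
For each `P` the sets `B` with `B ∩ P ∈ {∅, P}` (those not splitting `P`) form a field, and so do
the sets `B` with `B \ A ∈ F` when `A ∈ F`. Since `A` is an atom, no member of `F` splits `A'` or
`A \ A'`, so the intersection of these three fields contains `F ∪ {A'}`, hence `C(F ∪ {A'})`.
Every `B` of that intersection is `(B ∩ A') ∪ (B ∩ (A \ A')) ∪ (B \ A)`.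
-/

/-- A field of sets over `X`: contains `X` (i.e. `univ`) and is closed under
finite unions, finite intersections and complements relative to `X`. -/
def IsSetField {X : Type*} (F : Set (Set X)) : Prop :=
  Set.univ ∈ F ∧ (∀ A ∈ F, ∀ B ∈ F, A ∪ B ∈ F) ∧
    (∀ A ∈ F, ∀ B ∈ F, A ∩ B ∈ F) ∧ (∀ A ∈ F, Aᶜ ∈ F)

/-- An atom of a field of sets `F`: a non-empty member of `F` none of whose
non-empty proper subsets belongs to `F`. -/
def SetFieldAtom {X : Type*} (F : Set (Set X)) (A : Set X) : Prop :=
  A ∈ F ∧ A.Nonempty ∧ ∀ B ∈ F, B ⊂ A → B = ∅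

/-- The field of sets generated by a family `S` of subsets of `X`:
the smallest field of sets over `X` containing every member of `S`. -/
def genSetField {X : Type*} (S : Set (Set X)) : Set (Set X) :=
  ⋂₀ {F | IsSetField F ∧ S ⊆ F}

open Set

section

variable {X : Type*}

theorem genSetField_subset {S T : Set (Set X)} (hT : IsSetField T) (hST : S ⊆ T) :
    genSetField S ⊆ T :=
  sInter_subset_of_mem ⟨hT, hST⟩

theorem IsSetField.inter {F G : Set (Set X)} (hF : IsSetField F) (hG : IsSetField G) :
    IsSetField (F ∩ G) :=
  ⟨⟨hF.1, hG.1⟩, fun _ hA _ hB => ⟨hF.2.1 _ hA.1 _ hB.1, hG.2.1 _ hA.2 _ hB.2⟩,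
    fun _ hA _ hB => ⟨hF.2.2.1 _ hA.1 _ hB.1, hG.2.2.1 _ hA.2 _ hB.2⟩,
    fun _ hA => ⟨hF.2.2.2 _ hA.1, hG.2.2.2 _ hA.2⟩⟩

theorem IsSetField.empty_mem {F : Set (Set X)} (hF : IsSetField F) : ∅ ∈ F := by
  simpa using hF.2.2.2 _ hF.1

theorem IsSetField.sdiff_mem {F : Set (Set X)} (hF : IsSetField F) {A B : Set X} (hA : A ∈ F)
    (hB : B ∈ F) : A \ B ∈ F :=
  hF.2.2.1 _ hA _ (hF.2.2.2 _ hB)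

theorem isSetField_setOf_inter_mem_pair (P : Set X) :
    IsSetField {B : Set X | B ∩ P ∈ ({∅, P} : Set (Set X))} := by
  simp only [IsSetField, mem_ofPred_eq, mem_insert_iff, mem_singleton_iff]
  refine ⟨Or.inr (univ_inter P), ?_, ?_, ?_⟩
  · rintro B (hB | hB) C (hC | hC) <;> simp [union_inter_distrib_right, hB, hC]
  · rintro B (hB | hB) C (hC | hC) <;>
      simp [inter_inter_distrib_right, hB, hC, inter_comm P]
  · rintro B (hB | hB)
    · exact Or.inr (inter_eq_right.mpr fun x hxP hxB => (hB.subset ⟨hxB, hxP⟩ : x ∈ (∅ : Set X)))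
    · exact Or.inl (eq_empty_of_forall_notMem fun _ hx => hx.1 (hB.symm.subset hx.2).1)

theorem IsSetField.setOf_sdiff_mem {F : Set (Set X)} (hF : IsSetField F) {A : Set X}
    (hA : A ∈ F) : IsSetField {B : Set X | B \ A ∈ F} := by
  obtain ⟨huniv, hunion, hinter, hcompl⟩ := hF
  refine ⟨by simpa [← compl_eq_univ_sdiff] using hcompl _ hA, fun B hB C hC => ?_,
    fun B hB C hC => ?_, fun B hB => ?_⟩
  · simpa only [mem_ofPred_eq, union_sdiff_distrib] using hunion _ hB _ hC
  · simpa only [mem_ofPred_eq, sdiff_inter_distrib_right] using hinter _ hB _ hC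
  · have : Bᶜ \ A = (B \ A ∪ A)ᶜ := by rw [sdiff_union_self, compl_union, Set.sdiff_eq]
    simpa only [mem_ofPred_eq, this] using hcompl _ (hunion _ hB _ hA)

theorem SetFieldAtom.inter_eq_empty_or_subset {F : Set (Set X)} (hF : IsSetField F) {A : Set X}
    (hA : SetFieldAtom F A) {G : Set X} (hG : G ∈ F) : A ∩ G = ∅ ∨ A ⊆ G := by
  by_cases h : A ⊆ G
  · exact Or.inr h
  · exact Or.inl (hA.2.2 _ (hF.2.2.1 _ hA.1 _ hG)
      (ssubset_of_subset_not_subset inter_subset_left fun hs => h (hs.trans inter_subset_right)))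

theorem SetFieldAtom.inter_mem_pair_of_subset {F : Set (Set X)} (hF : IsSetField F)
    {A : Set X} (hA : SetFieldAtom F A) {G P : Set X} (hG : G ∈ F) (hP : P ⊆ A) :
    G ∩ P ∈ ({∅, P} : Set (Set X)) := by
  rcases hA.inter_eq_empty_or_subset hF hG with h | h
  · exact Or.inl (subset_empty_iff.mp fun x hx => h ▸ ⟨hP hx.2, hx.1⟩)
  · exact Or.inr (inter_eq_right.mpr (hP.trans h))

theorem eq_inter_union_inter_sdiff_union_sdiff (B A A' : Set X) :
    B = B ∩ A' ∪ B ∩ (A \ A') ∪ B \ A := by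
  ext x; by_cases x ∈ A' <;> by_cases x ∈ A <;> simp [*]

end

theorem stmt_1_general {X : Type*} (F : Set (Set X)) (hF : IsSetField F)
    (A : Set X) (hA : SetFieldAtom F A)
    (A' : Set X) (hA'sub : A' ⊆ A)
    (B : Set X) (hB : B ∈ genSetField (F ∪ {A'})) :
    ∃ D E G : Set X, D ∈ ({∅, A'} : Set (Set X)) ∧
      E ∈ ({∅, A \ A'} : Set (Set X)) ∧ G ∈ F ∧ B = D ∪ E ∪ G := by
  set T : Set (Set X) := {B | B \ A ∈ F} ∩ {B | B ∩ A' ∈ ({∅, A'} : Set (Set X))} ∩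
    {B | B ∩ (A \ A') ∈ ({∅, A \ A'} : Set (Set X))}
  have hT : IsSetField T := ((hF.setOf_sdiff_mem hA.1).inter
    (isSetField_setOf_inter_mem_pair A')).inter (isSetField_setOf_inter_mem_pair _)
  have hFT : F ∪ {A'} ⊆ T := by
    rintro G (hG | rfl)
    · exact ⟨⟨hF.sdiff_mem hG hA.1, hA.inter_mem_pair_of_subset hF hG hA'sub⟩,
        hA.inter_mem_pair_of_subset hF hG sdiff_subset⟩
    · refine ⟨⟨?_, Or.inr (inter_self G)⟩, Or.inl (inter_sdiff_self G A)⟩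
      simpa [sdiff_eq_empty.mpr hA'sub] using hF.empty_mem
  obtain ⟨⟨hBA, hBA'⟩, hBAA'⟩ := genSetField_subset hT hFT hB
  exact ⟨_, _, _, hBA', hBAA', hBA, eq_inter_union_inter_sdiff_union_sdiff B A A'⟩

theorem stmt_1 {X : Type*} (F : Set (Set X)) (hF : IsSetField F)
    (A : Set X) (hA : SetFieldAtom F A)
    (A' : Set X) (hA'ne : A'.Nonempty) (hA'sub : A' ⊆ A) (hA'proper : A' ≠ A)
    (B : Set X) (hB : B ∈ genSetField (F ∪ {A'})) :
    ∃ D E G : Set X, D ∈ ({∅, A'} : Set (Set X)) ∧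
      E ∈ ({∅, A \ A'} : Set (Set X)) ∧ G ∈ F ∧ B = D ∪ E ∪ G :=
  stmt_1_general F hF A hA A' hA'sub B hB
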